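/- arXiv:1610.08870 — 5 statements merged into one kernel-verified Lean document; each statement's English description precedes it below -/
import Mathlib

section
/- If f is a concave nonnegative function on [0,∞), then for any positive reals x < y and any z ≥ 0, one has x·f(z/x) ≤ y·f(z/y). -/
open Set

theorem ConcaveOn.smul_le_map_smul {𝕜 E β : Type*} [Ring 𝕜] [PartialOrder 𝕜] [IsOrderedRing 𝕜]
    [AddCommMonoid E] [Module 𝕜 E] [AddCommMonoid β] [PartialOrder β] [IsOrderedAddMonoid β]
    [Module 𝕜 β] [PosSMulMono 𝕜 β] {s : Set E} {f : E → β} (hf : ConcaveOn 𝕜 s f)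
    (h₀ : (0 : E) ∈ s) (hf₀ : 0 ≤ f 0) {x : E} (hx : x ∈ s) {a : 𝕜} (ha₀ : 0 ≤ a) (ha₁ : a ≤ 1) :
    a • f x ≤ f (a • x) := by
  have hchord := hf.2 hx h₀ ha₀ (sub_nonneg.2 ha₁) (add_sub_cancel a 1)
  rw [smul_zero, add_zero] at hchord
  exact (le_add_of_nonneg_right (smul_nonneg (sub_nonneg.2 ha₁) hf₀)).trans hchord

/-- If `f` is a concave nonnegative function on `[0,∞)`, then for positive `x < y`
and any `z ≥ 0`, `x·f(z/x) ≤ y·f(z/y)`. -/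
theorem concave_scaling_ineq (f : ℝ → ℝ)
    (hconc : ConcaveOn ℝ (Set.Ici 0) f)
    (hnonneg : ∀ t ∈ Set.Ici (0 : ℝ), 0 ≤ f t)
    (x y z : ℝ) (hx : 0 < x) (hxy : x < y) (hz : 0 ≤ z) :
    x * f (z / x) ≤ y * f (z / y) := by
  have hy : 0 < y := hx.trans hxy
  have hscale : f (z / y) = f ((x / y) • (z / x)) := by
    rw [smul_eq_mul, div_mul_div_cancel₀' hx.ne']
  calc x * f (z / x) = y * ((x / y) • f (z / x)) := by
        rw [smul_eq_mul]; field_simp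
    _ ≤ y * f (z / y) := by
        rw [hscale]
        gcongr
        exact hconc.smul_le_map_smul self_mem_Ici (hnonneg 0 self_mem_Ici)
          (div_nonneg hz hx.le) (by positivity) ((div_le_one hy).2 hxy.le)
end

section
/- The function f(x) = x·log(a/x² + b) is monotonically increasing on (0,∞) provided a > 0 and b ≥ e/2. -/
/-!
The derivative of `f` is `log t - 2 (t - b) / t` with `t = a / x² + b`. Since `t ↦ t log t` is
convex, it lies above its tangent line at `t = e`, which is `t ↦ 2t - e`; together with
`2b ≥ e` this makes the derivative nonnegative, and positive unless `t = e`. As `t` is strictly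
decreasing in `x`, the derivative vanishes at most once, which does not spoil strict monotonicity.
-/

open Real Set

theorem strictMonoOn_of_hasDerivAt_nonneg_of_countable {D : Set ℝ} (hD : Convex ℝ D)
    {f f' : ℝ → ℝ} (hf : ContinuousOn f D) (hf' : ∀ x ∈ interior D, HasDerivAt f (f' x) x)
    (hf'₀ : ∀ x ∈ interior D, 0 ≤ f' x) (hzero : {x ∈ interior D | f' x = 0}.Countable) :
    StrictMonoOn f D := by
  have hmono : MonotoneOn f D :=
    monotoneOn_of_hasDerivWithinAt_nonneg hD hf (fun x hx ↦ (hf' x hx).hasDerivWithinAt) hf'₀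
  intro x hx y hy hxy
  refine (hmono hx hy hxy.le).lt_of_ne fun hfxy ↦ ?_
  have hIcc : Icc x y ⊆ D := hD.ordConnected.out hx hy
  have hIoo : Ioo x y ⊆ interior D := by
    simpa only [interior_Icc] using interior_mono hIcc
  -- `f` is constant on `[x, y]`, so `f'` vanishes on the uncountable interval `(x, y)`.
  have hconst : EqOn f (fun _ ↦ f x) (Icc x y) := fun z hz ↦
    le_antisymm (hfxy ▸ hmono (hIcc hz) hy hz.2) (hmono hx (hIcc hz) hz.1)
  have hsub : Ioo x y ⊆ {x ∈ interior D | f' x = 0} := fun z hz ↦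
    ⟨hIoo hz, (hf' z (hIoo hz)).unique <| (hasDerivAt_const z (f x)).congr_of_eventuallyEq <|
      hconst.eventuallyEq_of_mem (Icc_mem_nhds hz.1 hz.2)⟩
  exact hxy.not_ge (Cardinal.Real.Ioo_countable_iff.mp (hzero.mono hsub))

theorem strictAntiOn_div_sq_add {a : ℝ} (ha : 0 < a) (b : ℝ) :
    StrictAntiOn (fun x : ℝ ↦ a / x ^ 2 + b) (Ioi 0) := fun _ hx _ _ hxy ↦
  add_lt_add_left
    (div_lt_div_of_pos_left ha (pow_pos hx 2) (pow_lt_pow_left₀ hxy hx.le two_ne_zero)) b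

namespace Real

theorem two_mul_sub_exp_one_lt_mul_log {t : ℝ} (ht : 0 < t) (hne : t ≠ exp 1) :
    2 * t - exp 1 < t * log t := by
  have h := log_lt_sub_one_of_pos (div_pos (exp_pos 1) ht) (by
    rw [Ne, div_eq_one_iff_eq ht.ne']; exact Ne.symm hne)
  rw [log_div (exp_pos 1).ne' ht.ne', log_exp] at h
  have h' : 2 - log t < exp 1 / t := by linarith
  rw [lt_div_iff₀ ht] at h'
  linarith

theorem two_mul_sub_div_lt_log {b t : ℝ} (hb : exp 1 / 2 ≤ b) (ht : 0 < t) (hne : t ≠ exp 1) :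
    2 * (t - b) / t < log t := by
  rw [div_lt_iff₀ ht]
  linarith [two_mul_sub_exp_one_lt_mul_log ht hne]

theorem two_mul_sub_div_le_log {b t : ℝ} (hb : exp 1 / 2 ≤ b) (ht : 0 < t) :
    2 * (t - b) / t ≤ log t := by
  rcases eq_or_ne t (exp 1) with rfl | hne
  · rw [log_exp, div_le_one ht]
    linarith
  · exact (two_mul_sub_div_lt_log hb ht hne).le

end Real

theorem hasDerivAt_mul_log_div_sq_add {a b x : ℝ} (hx : x ≠ 0) (ht : a / x ^ 2 + b ≠ 0) :
    HasDerivAt (fun x : ℝ ↦ x * log (a / x ^ 2 + b))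
      (log (a / x ^ 2 + b) - 2 * (a / x ^ 2 + b - b) / (a / x ^ 2 + b)) x := by
  have hinner : HasDerivAt (fun x : ℝ ↦ a / x ^ 2 + b) (-(2 * a / x ^ 3)) x := by
    refine (((hasDerivAt_const x a).div (hasDerivAt_pow 2 x) (pow_ne_zero 2 hx)).add_const
      b).congr_deriv ?_
    field_simp
    ring
  refine ((hasDerivAt_id' x).mul (hinner.log ht)).congr_deriv ?_
  field_simp
  ring

/-- The function `f(x) = x·log(a/x² + b)` is monotonically increasing on `(0,∞)`
provided `a > 0` and `b ≥ e/2`. -/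
theorem strictMonoOn_mul_log_div_sq (a b : ℝ) (ha : 0 < a) (hb : Real.exp 1 / 2 ≤ b) :
    StrictMonoOn (fun x : ℝ => x * Real.log (a / x ^ 2 + b)) (Set.Ioi 0) := by
  have hb₀ : 0 < b := lt_of_lt_of_le (by positivity) hb
  have ht : ∀ x ∈ Ioi (0 : ℝ), 0 < a / x ^ 2 + b := fun x (hx : 0 < x) ↦ by positivity
  let f' (x : ℝ) : ℝ := log (a / x ^ 2 + b) - 2 * (a / x ^ 2 + b - b) / (a / x ^ 2 + b)
  have hderiv : ∀ x ∈ Ioi (0 : ℝ), HasDerivAt (fun x : ℝ ↦ x * log (a / x ^ 2 + b)) (f' x) x :=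
    fun x hx ↦ hasDerivAt_mul_log_div_sq_add (ne_of_gt hx) (ht x hx).ne'
  have hzero : ∀ x ∈ Ioi (0 : ℝ), f' x = 0 → a / x ^ 2 + b = exp 1 := fun x hx h0 ↦ by
    by_contra hne
    exact (two_mul_sub_div_lt_log hb (ht x hx) hne).ne' (sub_eq_zero.mp h0)
  refine strictMonoOn_of_hasDerivAt_nonneg_of_countable (f' := f') (convex_Ioi 0)
    (fun x hx ↦ (hderiv x hx).continuousAt.continuousWithinAt) ?_ ?_ ?_ <;>
    rw [interior_Ioi]
  · exact hderiv
  · exact fun x hx ↦ sub_nonneg.mpr (two_mul_sub_div_le_log hb (ht x hx))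
  · refine Subsingleton.countable fun x hx y hy ↦
      (strictAntiOn_div_sq_add ha b).injOn hx.1 hy.1 ?_
    exact (hzero x hx.1 hx.2).trans (hzero y hy.1 hy.2).symm
end

section
/- Let V_p : H_A → H_B ⊗ H_E be defined for p ∈ [0,1] by V_p|φ⟩ = √(1−p)·|φ⟩⊗|ψ⟩ ⊕ √p·|ψ⟩⊗|φ⟩ (the Stinespring isometry of the erasure channel). Then the operator norm ‖V_{1/2−x} − V_{1/2}‖ equals √(2 − √(1−2x) − √(1+2x)) for all x ∈ [0, 1/2]. -/
open scoped ComplexOrder Matrix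

/-- Operator norm of a complex matrix viewed as a map between Euclidean spaces. -/
noncomputable def opNorm {m n : Type*} [Fintype m] [Fintype n] [DecidableEq n]
    (A : Matrix m n ℂ) : ℝ :=
  ‖(Matrix.toEuclideanLin A).toContinuousLinearMap‖

/-- The Stinespring isometry `V_p` of the erasure channel: on `H_A = ℂ^d`, with
`H_B = H_E = H_A ⊕ ℂψ`, it sends `|φ⟩` to `√(1−p)|φ⟩⊗|ψ⟩ + √p|ψ⟩⊗|φ⟩`. -/
noncomputable def erasureIsometry (d : ℕ) (p : ℝ) :
    Matrix ((Fin d ⊕ Unit) × (Fin d ⊕ Unit)) (Fin d) ℂ :=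
  fun be a =>
    (if be.1 = Sum.inl a ∧ be.2 = Sum.inr () then (Real.sqrt (1 - p) : ℂ) else 0) +
    (if be.1 = Sum.inr () ∧ be.2 = Sum.inl a then (Real.sqrt p : ℂ) else 0)

/-- `‖V_{1/2−x} − V_{1/2}‖ = √(2 − √(1−2x) − √(1+2x))` for `x ∈ [0,1/2]`. -/
theorem erasure_isometry_norm (d : ℕ) (hd : 0 < d) (x : ℝ)
    (hx : x ∈ Set.Icc (0 : ℝ) (1 / 2)) :
    opNorm (erasureIsometry d (1 / 2 - x) - erasureIsometry d (1 / 2)) =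
      Real.sqrt (2 - Real.sqrt (1 - 2 * x) - Real.sqrt (1 + 2 * x)) := by
  obtain ⟨hx0, hx1⟩ := hx
  set α : ℝ := Real.sqrt (1/2 + x) - Real.sqrt (1/2) with hα
  set β : ℝ := Real.sqrt (1/2 - x) - Real.sqrt (1/2) with hβ
  set c : ℝ := α^2 + β^2 with hc
  have h2 : (0:ℝ) ≤ 1/2 + x := by linarith
  have h3 : (0:ℝ) ≤ 1/2 - x := by linarith
  have h1 : Real.sqrt (1 + 2*x) = 2 * (Real.sqrt (1/2 + x) * Real.sqrt (1/2)) := by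
    rw [← Real.sqrt_mul h2]
    rw [show (1:ℝ) + 2*x = 4 * ((1/2+x) * (1/2)) by ring, Real.sqrt_mul (by norm_num),
      show (4:ℝ) = 2^2 by norm_num, Real.sqrt_sq (by norm_num)]
  have h1' : Real.sqrt (1 - 2*x) = 2 * (Real.sqrt (1/2 - x) * Real.sqrt (1/2)) := by
    rw [← Real.sqrt_mul h3]
    rw [show (1:ℝ) - 2*x = 4 * ((1/2-x) * (1/2)) by ring, Real.sqrt_mul (by norm_num),
      show (4:ℝ) = 2^2 by norm_num, Real.sqrt_sq (by norm_num)]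
  have hc' : 2 - Real.sqrt (1 - 2*x) - Real.sqrt (1 + 2*x) = c := by
    have e1 := Real.sq_sqrt h2
    have e2 := Real.sq_sqrt h3
    have e3 := Real.sq_sqrt (show (0:ℝ) ≤ 1/2 by norm_num)
    rw [h1, h1', hc, hα, hβ]
    ring_nf
    nlinarith [e1, e2, e3]
  have hcnn : (0:ℝ) ≤ c := by positivity
  set D := erasureIsometry d (1/2 - x) - erasureIsometry d (1/2) with hD
  set L := (Matrix.toEuclideanLin D).toContinuousLinearMap with hLdef
  have hDapp : ∀ (b e : Fin d ⊕ Unit) (a : Fin d), D (b, e) a =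
      (if b = Sum.inl a ∧ e = Sum.inr () then (α:ℂ) else 0) +
      (if b = Sum.inr () ∧ e = Sum.inl a then (β:ℂ) else 0) := by
    intro b e a
    simp only [hD, Matrix.sub_apply, erasureIsometry]
    push_cast [hα, hβ]
    by_cases h : b = Sum.inl a ∧ e = Sum.inr () <;>
      by_cases h' : b = Sum.inr () ∧ e = Sum.inl a <;>
      simp [h, h'] <;> ring_nf <;>
      simp [show (1:ℝ) - (1/2 - x) = 1/2 + x by ring] <;> ring
  have key : ∀ v : EuclideanSpace ℂ (Fin d), ‖L v‖ = Real.sqrt c * ‖v‖ := by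
    intro v
    have happ : ∀ be : (Fin d ⊕ Unit) × (Fin d ⊕ Unit),
        L v be = ∑ a, D be a * v a := fun be => rfl
    have z1 : ∀ b1 b2 : Fin d, L v (Sum.inl b1, Sum.inl b2) = 0 := by
      intro b1 b2; rw [happ]; simp [hDapp]
    have z2 : ∀ b1 : Fin d, L v (Sum.inl b1, Sum.inr ()) = (α:ℂ) * v b1 := by
      intro b1; rw [happ]; simp [hDapp]
    have z3 : ∀ a2 : Fin d, L v (Sum.inr (), Sum.inl a2) = (β:ℂ) * v a2 := by
      intro a2; rw [happ]; simp [hDapp]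
    have z4 : L v (Sum.inr (), Sum.inr ()) = 0 := by
      rw [happ]; simp [hDapp]
    have hsum : ∑ be : (Fin d ⊕ Unit) × (Fin d ⊕ Unit), ‖L v be‖^2
        = c * ∑ a, ‖v a‖^2 := by
      rw [Fintype.sum_prod_type]
      rw [Fintype.sum_sum_type]
      simp only [Fintype.sum_sum_type, Fintype.sum_unique, z1, z2, z3, z4]
      simp only [norm_mul, Complex.norm_real, Real.norm_eq_abs, mul_pow, sq_abs,
        norm_zero, Finset.sum_const_zero, zero_pow, add_zero, zero_add]
      have h0 : (0:ℝ)^2 = 0 := by norm_num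
      simp only [h0, Finset.sum_const_zero, zero_add, add_zero, ← Finset.mul_sum]
      rw [hc]; ring
    rw [EuclideanSpace.norm_eq, EuclideanSpace.norm_eq, hsum, Real.sqrt_mul hcnn]
  have hnorm : ‖L‖ = Real.sqrt c := by
    refine le_antisymm (L.opNorm_le_bound (Real.sqrt_nonneg _) fun v => (key v).le) ?_
    set v0 : EuclideanSpace ℂ (Fin d) := EuclideanSpace.single (⟨0, hd⟩ : Fin d) (1:ℂ)
      with hv0
    have hv : ‖v0‖ = 1 := by simp [hv0, EuclideanSpace.norm_single]
    calc Real.sqrt c = ‖L v0‖ := by rw [key v0, hv, mul_one]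
      _ ≤ ‖L‖ * ‖v0‖ := L.le_opNorm v0
      _ = ‖L‖ := by rw [hv, mul_one]
  show ‖L‖ = _
  rw [hnorm, hc']
end

section
/- Let H_A be a positive self-adjoint operator (Hamiltonian) with Tr e^{−λH_A} < ∞ for all λ > 0. Then the condition lim_{λ→0⁺} (Tr e^{−λH_A})^λ = 1 holds if and only if F_{H_A}(E) = o(√E) as E → ∞, where F_{H_A}(E) is the maximal von Neumann entropy over states ρ with Tr H_A ρ ≤ E. -/
open Filter

/-- The maximal von Neumann entropy over (diagonal) states with mean energy at most `E`,
for a Hamiltonian with eigenvalue sequence `e`. -/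
noncomputable def maxEntropySeq (e : ℕ → ℝ) (E : ℝ) : ℝ :=
  sSup {S : ℝ | ∃ p : ℕ → ℝ, (∀ k, 0 ≤ p k) ∧ Summable p ∧ (∑' k, p k) = 1 ∧
    Summable (fun k => p k * e k) ∧ (∑' k, p k * e k) ≤ E ∧
    Summable (fun k => p k * Real.log (p k)) ∧
    S = ∑' k, -(p k * Real.log (p k))}

/-! ### Auxiliary definitions and lemmas -/

/-- The partition function. -/
noncomputable def Zf (e : ℕ → ℝ) (t : ℝ) : ℝ := ∑' k, Real.exp (-t * e k)

/-- The set of achievable entropies at energy at most `E`. -/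
def entSet (e : ℕ → ℝ) (E : ℝ) : Set ℝ :=
  {S : ℝ | ∃ p : ℕ → ℝ, (∀ k, 0 ≤ p k) ∧ Summable p ∧ (∑' k, p k) = 1 ∧
    Summable (fun k => p k * e k) ∧ (∑' k, p k * e k) ≤ E ∧
    Summable (fun k => p k * Real.log (p k)) ∧
    S = ∑' k, -(p k * Real.log (p k))}

lemma Zf_pos (e : ℕ → ℝ) {t : ℝ} (hs : Summable (fun k => Real.exp (-t * e k))) :
    0 < Zf e t :=
  Summable.tsum_pos hs (fun _ => (Real.exp_pos _).le) 0 (Real.exp_pos _)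

lemma gibbs_pointwise {a b : ℝ} (ha : 0 ≤ a) (hb : 0 < b) :
    -(a * Real.log a) ≤ -(a * Real.log b) + (b - a) := by
  rcases eq_or_lt_of_le ha with h | h
  · simp [← h, hb.le]
  · have h1 : Real.log (b / a) ≤ b / a - 1 := Real.log_le_sub_one_of_pos (div_pos hb h)
    have h2 : Real.log (b / a) = Real.log b - Real.log a := Real.log_div hb.ne' h.ne'
    have := mul_le_mul_of_nonneg_left h1 h.le
    rw [h2, mul_sub, mul_sub, mul_div_cancel₀ _ h.ne'] at this
    linarith

lemma summable_mul_exp (e : ℕ → ℝ) (he : ∀ k, 0 ≤ e k)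
    (hsum : ∀ t : ℝ, 0 < t → Summable (fun k => Real.exp (-t * e k)))
    {t : ℝ} (ht : 0 < t) : Summable (fun k => e k * Real.exp (-t * e k)) := by
  have ht2 : 0 < t / 2 := by linarith
  refine Summable.of_nonneg_of_le (fun k => mul_nonneg (he k) (Real.exp_pos _).le)
    (fun k => ?_) (((hsum (t/2) ht2)).mul_left (2 / t))
  have key : e k * Real.exp (-(t/2) * e k) ≤ 2 / t := by
    have h1 : (t/2) * e k ≤ Real.exp ((t/2) * e k) := by
      have := Real.add_one_le_exp ((t/2) * e k); linarith
    have h2 : 0 < Real.exp (-(t/2) * e k) := Real.exp_pos _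
    have h3 : Real.exp ((t/2) * e k) * Real.exp (-(t/2) * e k) = 1 := by
      rw [← Real.exp_add]; ring_nf; exact Real.exp_zero
    have h4 : (t/2) * (e k * Real.exp (-(t/2) * e k)) ≤ 1 := by
      nlinarith [mul_le_mul_of_nonneg_right h1 h2.le]
    rw [le_div_iff₀ ht]
    linarith
  have hsplit : Real.exp (-t * e k) = Real.exp (-(t/2) * e k) * Real.exp (-(t/2) * e k) := by
    rw [← Real.exp_add]; ring_nf
  calc e k * Real.exp (-t * e k)
      = (e k * Real.exp (-(t/2) * e k)) * Real.exp (-(t/2) * e k) := by rw [hsplit]; ring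
    _ ≤ (2 / t) * Real.exp (-(t/2) * e k) :=
        mul_le_mul_of_nonneg_right key (Real.exp_pos _).le

/-- every achievable entropy is at most `t E + log Z(t)` -/
lemma entSet_le (e : ℕ → ℝ) {t E S : ℝ} (ht : 0 < t)
    (hs : Summable (fun k => Real.exp (-t * e k)))
    (hS : S ∈ entSet e E) : S ≤ t * E + Real.log (Zf e t) := by
  obtain ⟨p, hp0, hps, hp1, hpe, hpeE, hpl, rfl⟩ := hS
  set Z := Zf e t with hZ
  have hZpos : 0 < Z := Zf_pos e hs
  set q : ℕ → ℝ := fun k => Real.exp (-t * e k) / Z with hq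
  have hqpos : ∀ k, 0 < q k := fun k => div_pos (Real.exp_pos _) hZpos
  have hqs : Summable q := hs.div_const Z
  have hq1 : (∑' k, q k) = 1 := by
    rw [hq]; simp only []
    rw [tsum_div_const]; exact div_self hZpos.ne'
  have hlogq : ∀ k, Real.log (q k) = -t * e k - Real.log Z := fun k => by
    rw [hq]; simp only []
    rw [Real.log_div (Real.exp_ne_zero _) hZpos.ne', Real.log_exp]
  have hpt : ∀ k, -(p k * Real.log (p k)) ≤
      (t * (p k * e k) + Real.log Z * p k) + (q k - p k) := by
    intro k
    have := gibbs_pointwise (hp0 k) (hqpos k)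
    rw [hlogq k] at this
    calc -(p k * Real.log (p k)) ≤ -(p k * (-t * e k - Real.log Z)) + (q k - p k) := this
      _ = (t * (p k * e k) + Real.log Z * p k) + (q k - p k) := by ring
  have hs1 : Summable (fun k => t * (p k * e k) + Real.log Z * p k) :=
    (hpe.mul_left t).add (hps.mul_left (Real.log Z))
  have hs2 : Summable (fun k => q k - p k) := hqs.sub hps
  have hSle : (∑' k, -(p k * Real.log (p k))) ≤
      ∑' k, ((t * (p k * e k) + Real.log Z * p k) + (q k - p k)) :=
    Summable.tsum_le_tsum hpt (hpl.neg) (hs1.add hs2)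
  have hrhs : (∑' k, ((t * (p k * e k) + Real.log Z * p k) + (q k - p k)))
      = t * (∑' k, p k * e k) + Real.log Z := by
    rw [Summable.tsum_add hs1 hs2, Summable.tsum_add (hpe.mul_left t) (hps.mul_left (Real.log Z)),
      tsum_mul_left, tsum_mul_left, Summable.tsum_sub hqs hps, hq1, hp1]
    ring
  rw [hrhs] at hSle
  have : t * (∑' k, p k * e k) ≤ t * E := mul_le_mul_of_nonneg_left hpeE ht.le
  linarith

/-- the Gibbs state: its entropy `t * Et + log Z(t)` belongs to `entSet e E`
whenever its energy `Et` is at most `E`. -/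
lemma gibbs_mem (e : ℕ → ℝ) (he : ∀ k, 0 ≤ e k)
    (hsum : ∀ t : ℝ, 0 < t → Summable (fun k => Real.exp (-t * e k)))
    {t : ℝ} (ht : 0 < t) {E : ℝ}
    (hE : (∑' k, (Real.exp (-t * e k) / Zf e t) * e k) ≤ E) :
    t * (∑' k, (Real.exp (-t * e k) / Zf e t) * e k) + Real.log (Zf e t)
      ∈ entSet e E := by
  set Z := Zf e t with hZ
  have hZpos : 0 < Z := Zf_pos e (hsum t ht)
  set q : ℕ → ℝ := fun k => Real.exp (-t * e k) / Z with hq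
  have hq0 : ∀ k, 0 ≤ q k := fun k => (div_pos (Real.exp_pos _) hZpos).le
  have hqs : Summable q := (hsum t ht).div_const Z
  have hq1 : (∑' k, q k) = 1 := by
    rw [hq]; simp only []
    rw [tsum_div_const]; exact div_self hZpos.ne'
  have hqe : Summable (fun k => q k * e k) := by
    have h1 : Summable (fun k => e k * Real.exp (-t * e k)) := summable_mul_exp e he hsum ht
    have h2 := h1.div_const Z
    refine h2.congr (fun k => ?_)
    rw [hq]; ring
  have hlogq : ∀ k, Real.log (q k) = -t * e k - Real.log Z := fun k => by
    rw [hq]; simp only []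
    rw [Real.log_div (Real.exp_ne_zero _) hZpos.ne', Real.log_exp]
  have hql : Summable (fun k => q k * Real.log (q k)) := by
    have h1 : Summable (fun k => -t * (q k * e k) - Real.log Z * q k) :=
      (hqe.mul_left (-t)).sub (hqs.mul_left (Real.log Z))
    refine h1.congr (fun k => ?_)
    rw [hlogq k]; ring
  refine ⟨q, hq0, hqs, hq1, hqe, hE, hql, ?_⟩
  have h1 : (∑' k, -(q k * Real.log (q k)))
      = ∑' k, (t * (q k * e k) + Real.log Z * q k) := by
    refine tsum_congr (fun k => ?_)
    rw [hlogq k]; ring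
  rw [h1, Summable.tsum_add (hqe.mul_left t) (hqs.mul_left (Real.log Z)),
    tsum_mul_left, tsum_mul_left, hq1, mul_one]

lemma zero_mem_entSet (e : ℕ → ℝ) {E : ℝ} (he0 : e 0 ≤ E) : (0:ℝ) ∈ entSet e E := by
  refine ⟨fun k => if k = 0 then 1 else 0, ?_, ?_, ?_, ?_, ?_, ?_, ?_⟩
  · intro k; simp only []; split <;> norm_num
  · exact summable_of_ne_finset_zero (s := {0}) (by intro k hk; simp at hk; simp [hk])
  · rw [tsum_eq_single 0 (by intro b hb; simp [hb])]; simp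
  · refine summable_of_ne_finset_zero (s := {0}) (by intro k hk; simp at hk; simp [hk])
  · rw [tsum_eq_single 0 (by intro b hb; simp [hb])]; simpa using he0
  · refine (summable_zero).congr (fun k => ?_)
    by_cases h : k = 0 <;> simp [h]
  · rw [tsum_eq_single 0 (by intro b hb; simp [hb])]; simp

lemma one_le_Zf (e : ℕ → ℝ) (hmono : Monotone e)
    (hsum : ∀ t : ℝ, 0 < t → Summable (fun k => Real.exp (-t * e k)))
    {t : ℝ} (ht : 0 < t) (hts : t * (e 1 + 1) ≤ Real.log 2) : 1 ≤ Zf e t := by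
  have h01 : e 0 ≤ e 1 := hmono (by norm_num)
  have hsumle : Real.exp (-t * e 0) + Real.exp (-t * e 1) ≤ Zf e t := by
    have := Summable.sum_le_tsum ({0,1} : Finset ℕ) (fun k _ => (Real.exp_pos (-t * e k)).le)
      (hsum t ht)
    simpa [Zf, neg_mul] using this
  have h2 : Real.exp (-t * e 1) ≤ Real.exp (-t * e 0) :=
    Real.exp_le_exp.2 (by nlinarith)
  have h3 : (2:ℝ)⁻¹ ≤ Real.exp (-t * e 1) := by
    rw [show ((2:ℝ)⁻¹) = Real.exp (-Real.log 2) by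
      rw [Real.exp_neg, Real.exp_log]; norm_num]
    apply Real.exp_le_exp.2
    nlinarith
  linarith

/-- For a positive Hamiltonian with `Tr e^{−λH} < ∞` for all `λ > 0` (eigenvalue
sequence `e`), the condition `lim_{λ→0⁺} (Tr e^{−λH})^λ = 1` holds iff
`F_H(E) = o(√E)` as `E → ∞`. -/
theorem gibbs_condition_iff_entropy_littleO
    (e : ℕ → ℝ) (he : ∀ k, 0 ≤ e k) (hmono : Monotone e)
    (hsum : ∀ t : ℝ, 0 < t → Summable (fun k => Real.exp (-t * e k))) :
    Tendsto (fun t : ℝ => (∑' k, Real.exp (-t * e k)) ^ t)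
        (nhdsWithin 0 (Set.Ioi 0)) (nhds 1) ↔
      (fun E => maxEntropySeq e E) =o[atTop] (fun E => Real.sqrt E) := by
  have hFS : ∀ E : ℝ, maxEntropySeq e E = sSup (entSet e E) := fun E => rfl
  have hbdd : ∀ E : ℝ, BddAbove (entSet e E) := fun E =>
    ⟨1 * E + Real.log (Zf e 1), fun S hS => entSet_le e one_pos (hsum 1 one_pos) hS⟩
  have key : Tendsto (fun t : ℝ => (∑' k, Real.exp (-t * e k)) ^ t)
      (nhdsWithin 0 (Set.Ioi 0)) (nhds 1)
      ↔ Tendsto (fun t : ℝ => t * Real.log (Zf e t)) (nhdsWithin 0 (Set.Ioi 0)) (nhds 0) := by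
    constructor
    · intro h
      have hc : Tendsto (fun t : ℝ => Real.log ((∑' k, Real.exp (-t * e k)) ^ t))
          (nhdsWithin 0 (Set.Ioi 0)) (nhds (Real.log 1)) :=
        (Real.continuousAt_log one_ne_zero).tendsto.comp h
      rw [Real.log_one] at hc
      refine hc.congr' ?_
      filter_upwards [self_mem_nhdsWithin] with t ht
      exact Real.log_rpow (Zf_pos e (hsum t ht)) t
    · intro h
      have hc : Tendsto (fun t : ℝ => Real.exp (t * Real.log (Zf e t)))
          (nhdsWithin 0 (Set.Ioi 0)) (nhds (Real.exp 0)) :=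
        Real.continuous_exp.continuousAt.tendsto.comp h
      rw [Real.exp_zero] at hc
      refine hc.congr' ?_
      filter_upwards [self_mem_nhdsWithin] with t ht
      rw [show ((∑' k, Real.exp (-t * e k)) : ℝ) = Zf e t from rfl,
        Real.rpow_def_of_pos (Zf_pos e (hsum t ht)), mul_comm]
  rw [key]
  constructor
  · -- `t log Z(t) → 0` implies `F = o(√E)`
    intro hG
    rw [Asymptotics.isLittleO_iff]
    intro c hc
    have h1 : ∀ᶠ t in nhdsWithin (0:ℝ) (Set.Ioi 0),
        |t * Real.log (Zf e t)| < c^2/9 := by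
      have h0 := Metric.tendsto_nhds.mp hG (c^2/9) (by positivity)
      refine h0.mono fun t ht => ?_
      rw [Real.dist_eq, sub_zero] at ht
      exact ht
    obtain ⟨u, hu, hsub⟩ := mem_nhdsGT_iff_exists_Ioo_subset.mp h1
    have hupos : (0:ℝ) < u := hu
    filter_upwards [eventually_ge_atTop (max (max (e 0) 1) ((c/(3*u))^2 + 1))] with E hE
    have hE0 : e 0 ≤ E := le_trans (le_trans (le_max_left _ _) (le_max_left _ _)) hE
    have hE1 : (1:ℝ) ≤ E := le_trans (le_trans (le_max_right _ _) (le_max_left _ _)) hE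
    have hEu : (c/(3*u))^2 + 1 ≤ E := le_trans (le_max_right _ _) hE
    set s := Real.sqrt E with hs
    have hs1 : (1:ℝ) ≤ s := by
      rw [hs, show (1:ℝ) = Real.sqrt 1 by simp]
      exact Real.sqrt_le_sqrt hE1
    have hspos : (0:ℝ) < s := lt_of_lt_of_le one_pos hs1
    have hss : s * s = E := Real.mul_self_sqrt (by linarith)
    set t := c/(3*s) with htdef
    have htpos : 0 < t := by positivity
    have hcus : c/(3*u) < s := by nlinarith [div_nonneg hc.le (by linarith : (0:ℝ) ≤ 3*u)]
    have htu : t < u := by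
      rw [htdef, div_lt_iff₀ (by linarith : (0:ℝ) < 3*s)]
      rw [div_lt_iff₀ (by linarith : (0:ℝ) < 3*u)] at hcus
      linarith
    have hlt : |t * Real.log (Zf e t)| < c^2/9 := hsub ⟨htpos, htu⟩
    have hFle : maxEntropySeq e E ≤ t * E + Real.log (Zf e t) := by
      rw [hFS]
      exact csSup_le ⟨0, zero_mem_entSet e hE0⟩
        (fun S hS => entSet_le e htpos (hsum t htpos) hS)
    have htE : t * E = c/3 * s := by
      rw [htdef, ← hss]; field_simp
    have hlog : Real.log (Zf e t) < c/3 * s := by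
      have h3 : t * Real.log (Zf e t) < c^2/9 := lt_of_le_of_lt (le_abs_self _) hlt
      have h4 : Real.log (Zf e t) < (c^2/9)/t := by
        rwa [lt_div_iff₀ htpos, mul_comm]
      have h5 : (c^2/9)/t = c/3 * s := by
        rw [htdef]; field_simp; ring
      linarith
    have hF0 : 0 ≤ maxEntropySeq e E := by
      rw [hFS]; exact le_csSup (hbdd E) (zero_mem_entSet e hE0)
    rw [Real.norm_eq_abs, Real.norm_eq_abs, abs_of_nonneg hF0,
      abs_of_nonneg (Real.sqrt_nonneg E)]
    nlinarith
  · -- `F = o(√E)` implies `t log Z(t) → 0`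
    intro h
    rw [Asymptotics.isLittleO_iff] at h
    rw [NormedAddCommGroup.tendsto_nhds_zero]
    intro ε hε
    set c := Real.sqrt (ε/2) with hcdef
    have hc : 0 < c := Real.sqrt_pos.2 (by linarith)
    have hcc : c * c = ε/2 := Real.mul_self_sqrt (by linarith)
    obtain ⟨M₀, hM₀⟩ := eventually_atTop.mp (h hc)
    set M := max M₀ 1 with hM
    set B := M + Real.log (Zf e 1) with hB
    set X := |B| + 1 with hX
    have hXpos : 0 < X := by positivity
    set δ := min (Real.log 2 / (e 1 + 1)) (ε/(2*X)) with hδ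
    have hδpos : 0 < δ := by
      apply lt_min
      · apply div_pos (Real.log_pos (by norm_num)); nlinarith [he 1]
      · positivity
    filter_upwards [Ioo_mem_nhdsGT_of_mem (Set.mem_Ico.mpr ⟨le_refl (0:ℝ), hδpos⟩)] with t ht
    obtain ⟨ht0, htδ⟩ := ht
    have hZs := hsum t ht0
    have hZ1 : 1 ≤ Zf e t := by
      apply one_le_Zf e hmono hsum ht0
      have hδ1 : δ ≤ Real.log 2 / (e 1 + 1) := min_le_left _ _
      have h2 : δ * (e 1 + 1) ≤ Real.log 2 :=
        (le_div_iff₀ (by nlinarith [he 1] : (0:ℝ) < e 1 + 1)).mp hδ1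
      nlinarith [he 1]
    have hlogZ : 0 ≤ Real.log (Zf e t) := Real.log_nonneg hZ1
    set Et := ∑' k, (Real.exp (-t * e k) / Zf e t) * e k with hEt
    have hEt0 : 0 ≤ Et :=
      tsum_nonneg (fun k => mul_nonneg
        (div_nonneg (Real.exp_pos _).le (Zf_pos e hZs).le) (he k))
    have hmem : t * Et + Real.log (Zf e t) ∈ entSet e Et :=
      gibbs_mem e he hsum ht0 (le_refl Et)
    have hGnn : 0 ≤ t * Real.log (Zf e t) := mul_nonneg ht0.le hlogZ
    rw [Real.norm_eq_abs, abs_of_nonneg hGnn]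
    rcases lt_or_ge Et M with hcase | hcase
    · -- small energy case
      have hSB : t * Et + Real.log (Zf e t) ≤ 1 * Et + Real.log (Zf e 1) :=
        entSet_le e one_pos (hsum 1 one_pos) hmem
      have hlogB : Real.log (Zf e t) ≤ B := by
        rw [hB]; nlinarith [mul_nonneg ht0.le hEt0]
      have h2 : t * Real.log (Zf e t) ≤ t * X := by
        apply mul_le_mul_of_nonneg_left _ ht0.le
        calc Real.log (Zf e t) ≤ B := hlogB
          _ ≤ |B| := le_abs_self B
          _ ≤ X := by rw [hX]; linarith
      have h3 : t * X < δ * X := mul_lt_mul_of_pos_right htδ hXpos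
      have h4 : δ * X ≤ ε/2 := by
        have h5 : δ ≤ ε/(2*X) := min_le_right _ _
        calc δ * X ≤ ε/(2*X) * X := mul_le_mul_of_nonneg_right h5 hXpos.le
          _ = ε/2 := by field_simp
      calc t * Real.log (Zf e t) ≤ t * X := h2
        _ < δ * X := h3
        _ ≤ ε/2 := h4
        _ < ε := by linarith
    · -- large energy case
      have hSF : t * Et + Real.log (Zf e t) ≤ maxEntropySeq e Et := by
        rw [hFS]; exact le_csSup (hbdd Et) hmem
      have hnorm := hM₀ Et (le_trans (le_max_left _ _) hcase)
      rw [Real.norm_eq_abs, Real.norm_eq_abs,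
        abs_of_nonneg (Real.sqrt_nonneg _)] at hnorm
      set s := Real.sqrt Et with hs
      have hs1 : (1:ℝ) ≤ s := by
        rw [hs, show (1:ℝ) = Real.sqrt 1 by simp]
        exact Real.sqrt_le_sqrt (le_trans (le_max_right _ _) hcase)
      have hspos : (0:ℝ) < s := lt_of_lt_of_le one_pos hs1
      have hss : s * s = Et := Real.mul_self_sqrt hEt0
      have hScs : t * Et + Real.log (Zf e t) ≤ c * s :=
        le_trans hSF (le_trans (le_abs_self _) hnorm)
      have hts : t * s ≤ c := by
        have h1 : t * Et ≤ c * s := by linarith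
        rw [← hss] at h1
        exact le_of_mul_le_mul_right (by nlinarith) hspos
      have hlogcs : Real.log (Zf e t) ≤ c * s := by
        nlinarith [mul_nonneg ht0.le hEt0]
      calc t * Real.log (Zf e t) ≤ t * (c * s) :=
            mul_le_mul_of_nonneg_left hlogcs ht0.le
        _ = c * (t * s) := by ring
        _ ≤ c * c := mul_le_mul_of_nonneg_left hts hc.le
        _ = ε/2 := hcc
        _ < ε := by linarith
end

section
/- Let H_A = ⊕ᵢ (Nᵢ + 1/2)ħωᵢ be the Hamiltonian of an ℓ-mode quantum oscillator with frequencies ω₁,…,ω_ℓ, E₀ = (1/2)Σᵢħωᵢ, and E_* = (Πᵢħωᵢ)^{1/ℓ}. Then F_{H_A}(E) ≤ ℓ·log((E+E₀)/(ℓE_*)) + ℓ for all E ≥ E₀, where F_{H_A}(E) is the maximal von Neumann entropy of states with mean energy at most E. -/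
/-!
With `nᵢ = xᵢ/ħωᵢ − 1/2` the mean occupation of mode `i`, the inequality `log t ≤ t − 1` gives
`g(nᵢ) ≤ log(nᵢ + 1) + 1 = log((xᵢ + ħωᵢ/2)/ħωᵢ) + 1`. Summing, the energies `xᵢ + ħωᵢ/2` add up to
`E + E₀`, so concavity of `log` bounds `∑ log(xᵢ + ħωᵢ/2)` by `ℓ log((E + E₀)/ℓ)`, while
`∑ log ħωᵢ = ℓ log E_*`.
-/

open Real Finset

/-- The paper's `g`: entropy of a single-mode thermal state with mean occupation number `n`. -/
noncomputable def boseEntropy (n : ℝ) : ℝ := (n + 1) * log (n + 1) - n * log n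

lemma boseEntropy_le_log_add_one_add_one {n : ℝ} (hn : 0 ≤ n) :
    boseEntropy n ≤ log (n + 1) + 1 := by
  rcases hn.eq_or_lt with rfl | hn
  · simp [boseEntropy]
  have h : n * log ((n + 1) / n) ≤ 1 :=
    calc n * log ((n + 1) / n) ≤ n * ((n + 1) / n - 1) :=
          mul_le_mul_of_nonneg_left (log_le_sub_one_of_pos (by positivity)) hn.le
      _ = 1 := by field_simp; ring
  rw [log_div (by positivity) hn.ne'] at h
  unfold boseEntropy
  linarith

lemma boseEntropy_div_sub_half_le {ω x : ℝ} (hω : 0 < ω) (hx : ω / 2 ≤ x) :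
    boseEntropy (x / ω - 1 / 2) ≤ log (x + ω / 2) - log ω + 1 := by
  have hn : 0 ≤ x / ω - 1 / 2 := by rw [sub_nonneg, le_div_iff₀ hω]; linarith
  have hshift : x / ω - 1 / 2 + 1 = (x + ω / 2) / ω := by field_simp; ring
  calc boseEntropy (x / ω - 1 / 2) ≤ log ((x + ω / 2) / ω) + 1 :=
        hshift ▸ boseEntropy_le_log_add_one_add_one hn
    _ = log (x + ω / 2) - log ω + 1 := by rw [log_div (by linarith) hω.ne']

section Finset

variable {ι : Type*} {s : Finset ι}

lemma sum_log_le_card_mul_log_mean (hs : s.Nonempty) {y : ι → ℝ} (hy : ∀ i ∈ s, 0 < y i) :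
    ∑ i ∈ s, log (y i) ≤ #s * log ((∑ i ∈ s, y i) / #s) := by
  have hcard : (0 : ℝ) < #s := by exact_mod_cast hs.card_pos
  have hjensen := strictConcaveOn_log_Ioi.concaveOn.le_map_sum (t := s)
    (w := fun _ => (#s : ℝ)⁻¹) (p := y) (fun _ _ => by positivity)
    (by simp [hcard.ne']) hy
  simp only [smul_eq_mul, inv_mul_eq_div, ← sum_div] at hjensen
  rwa [div_le_iff₀' hcard] at hjensen

lemma card_mul_log_div_card_mul_geomMean {ω : ι → ℝ} (hω : ∀ i ∈ s, 0 < ω i) (hs : s.Nonempty)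
    {S : ℝ} (hS : S ≠ 0) :
    #s * log (S / (#s * (∏ i ∈ s, ω i) ^ ((1 : ℝ) / #s)))
      = #s * log (S / #s) - ∑ i ∈ s, log (ω i) := by
  have hcard : (0 : ℝ) < #s := by exact_mod_cast hs.card_pos
  have hprod : 0 < ∏ i ∈ s, ω i := prod_pos hω
  rw [log_div hS (by positivity), log_mul hcard.ne' (by positivity), log_div hS hcard.ne',
    log_rpow hprod, log_prod fun i hi => (hω i hi).ne']
  field_simp
  ring

end Finset

/-- Upper bound on the maximal entropy of an `ℓ`-mode quantum oscillator: for any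
admissible energy distribution `x` with `∑ xᵢ = E` and `xᵢ ≥ ħωᵢ/2`,
`∑ g(xᵢ/ħωᵢ − 1/2) ≤ ℓ·log((E+E₀)/(ℓE_*)) + ℓ`, where `E₀ = (1/2)∑ħωᵢ` and
`E_*` is the geometric mean of the `ħωᵢ`. Hence `F_{H_A}(E)` obeys this bound. -/
theorem oscillator_entropy_bound (ℓ : ℕ) (hl : 0 < ℓ)
    (ω : Fin ℓ → ℝ) (hω : ∀ i, 0 < ω i)
    (E : ℝ) (x : Fin ℓ → ℝ) (hx : ∀ i, ω i / 2 ≤ x i) (hsumE : ∑ i, x i = E) :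
    (∑ i, ((x i / ω i - 1 / 2 + 1) * Real.log (x i / ω i - 1 / 2 + 1)
        - (x i / ω i - 1 / 2) * Real.log (x i / ω i - 1 / 2)))
      ≤ (ℓ : ℝ) * Real.log ((E + (1 / 2) * ∑ i, ω i)
          / (ℓ * (∏ i, ω i) ^ ((1 : ℝ) / ℓ))) + ℓ := by
  have hne : (univ : Finset (Fin ℓ)).Nonempty := univ_nonempty_iff.2 ⟨⟨0, hl⟩⟩
  have hy : ∀ i ∈ univ, 0 < x i + ω i / 2 := fun i _ => by linarith [hω i, hx i]
  have htotal : ∑ i, (x i + ω i / 2) = E + (1 / 2) * ∑ i, ω i := by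
    rw [sum_add_distrib, hsumE, mul_sum]; simp only [one_div, inv_mul_eq_div]
  have hjensen := sum_log_le_card_mul_log_mean hne hy
  have hgeom := card_mul_log_div_card_mul_geomMean (S := E + (1 / 2) * ∑ i, ω i)
    (fun i _ => hω i) hne (htotal ▸ (sum_pos hy hne).ne')
  rw [htotal] at hjensen
  simp only [card_univ, Fintype.card_fin] at hjensen hgeom
  calc ∑ i, boseEntropy (x i / ω i - 1 / 2)
      ≤ ∑ i, (log (x i + ω i / 2) - log (ω i) + 1) :=
        sum_le_sum fun i _ => boseEntropy_div_sub_half_le (hω i) (hx i)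
    _ = ∑ i, log (x i + ω i / 2) - ∑ i, log (ω i) + ℓ := by
        simp [sum_add_distrib, sum_sub_distrib]
    _ ≤ _ := by rw [hgeom]; linarith
end
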